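/- Let 𝒢₁ = (G₁, S, μ₁, l₁) and 𝒢₂ = (G₂, S, μ₂, l₂) be comparable reconciled gene trees and let α ∈ [0,1]. Then PLR(𝒢₁, 𝒢₂) ≥ PLR(LR(𝒢₁), LR(𝒢₂)), where LR(𝒢) is the least duplication-resolved tree obtained from 𝒢 by contracting all redundant edges. -/
import Mathlib


open SimpleGraph

attribute [local instance] Classical.propDecidable

/-- A rooted tree: a finite connected acyclic graph with a distinguished root. -/
structure RTree (V : Type*) [Fintype V] where
  adj : SimpleGraph V
  isTree : adj.IsTree
  root : V

variable {V : Type*} [Fintype V]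

/-- `Anc T a b` : `a` is an ancestor of `b` (i.e. `b ⪯ a`), expressed as:
`a` lies on the (unique) path from the root to `b`. -/
def Anc (T : RTree V) (a b : V) : Prop :=
  T.adj.dist T.root b = T.adj.dist T.root a + T.adj.dist a b

/-- `IsChild T c p` : `c` is a child of `p`. -/
def IsChild (T : RTree V) (c p : V) : Prop :=
  T.adj.Adj c p ∧ Anc T p c

/-- The set of children of `v`. -/
def childSet (T : RTree V) (v : V) : Set V := {c | IsChild T c v}

/-- A leaf is a node with no children. -/
def IsLeaf (T : RTree V) (v : V) : Prop := ∀ c, ¬ IsChild T c v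

/-- The clade of `v`: the set of leaves descending from `v`. -/
def clade (T : RTree V) (v : V) : Set V := {x | IsLeaf T x ∧ Anc T v x}

/-- `w` is the lowest common ancestor of the set `X` in `T`. -/
def IsLCA (T : RTree V) (X : Set V) (w : V) : Prop :=
  (∀ x ∈ X, Anc T w x) ∧ ∀ w', (∀ x ∈ X, Anc T w' x) → Anc T w' w

/-- A species tree is a rooted binary tree: every internal node has exactly two children. -/
def IsSpeciesTree (S : RTree V) : Prop :=
  ∀ v, ¬ IsLeaf S v → (childSet S v).ncard = 2

/-- Number of leaves of a rooted tree. -/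
noncomputable def numLeaves (T : RTree V) : ℕ := {v | IsLeaf T v}.ncard

/-- `Hsum S` = `H(S)`: the sum of root-to-internal-node distances in `S`. -/
noncomputable def Hsum (S : RTree V) : ℕ :=
  ∑ v : V, if IsLeaf S v then 0 else S.adj.dist S.root v

inductive Evt | dup | spec | extant
deriving DecidableEq

/-- A reconciled gene tree with species tree `S`, whose leaves are labeled bijectively by
the set of genes `Γ`. -/
structure Recon (Γ : Type*) (VG : Type*) (VS : Type*) [Fintype VG] [Fintype VS]
    (S : RTree VS) where
  tree : RTree VG
  geneLeaf : Γ → VG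
  geneLeaf_inj : Function.Injective geneLeaf
  geneLeaf_range : ∀ v, IsLeaf tree v ↔ ∃ g, geneLeaf g = v
  μ : VG → VS
  lbl : VG → Evt
  internal_children : ∀ v, ¬ IsLeaf tree v → 2 ≤ (childSet tree v).ncard
  leaf_species : ∀ v, IsLeaf tree v → IsLeaf S (μ v)
  leaf_lbl : ∀ v, IsLeaf tree v → lbl v = Evt.extant
  internal_lbl : ∀ v, ¬ IsLeaf tree v → lbl v = Evt.dup ∨ lbl v = Evt.spec
  time_consistent : ∀ a b, Anc tree a b → Anc S (μ a) (μ b)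
  spec_two_children : ∀ v, lbl v = Evt.spec →
    ¬ IsLeaf S (μ v) ∧ (childSet tree v).ncard = 2
  spec_separates : ∀ v, lbl v = Evt.spec →
    ∀ v₁ v₂, IsChild tree v₁ v → IsChild tree v₂ v → v₁ ≠ v₂ →
      ∃ s₁ s₂, IsChild S s₁ (μ v) ∧ IsChild S s₂ (μ v) ∧ s₁ ≠ s₂ ∧
        ((Anc S s₁ (μ v₁) ∧ Anc S s₂ (μ v₂)) ∨ (Anc S s₂ (μ v₁) ∧ Anc S s₁ (μ v₂)))

variable {Γ : Type*} {VS VG₁ VG₂ : Type*} [Fintype VS] [Fintype VG₁] [Fintype VG₂]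
  {S : RTree VS}

/-- The clade of a gene tree node, as a set of genes. -/
def gclade (𝒢 : Recon Γ VG₁ VS S) (v : VG₁) : Set Γ :=
  {g | Anc 𝒢.tree v (𝒢.geneLeaf g)}

/-- Two reconciled gene trees (over the same species tree and gene set) are comparable if
corresponding extant genes map to the same species. -/
def Comparable (𝒢₁ : Recon Γ VG₁ VS S) (𝒢₂ : Recon Γ VG₂ VS S) : Prop :=
  ∀ g, 𝒢₁.μ (𝒢₁.geneLeaf g) = 𝒢₂.μ (𝒢₂.geneLeaf g)

/-- `m` is the correspondence map `v ↦ lca_{G₂}(L(G₁(v)))`. -/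
def IsLcaMap (𝒢₁ : Recon Γ VG₁ VS S) (𝒢₂ : Recon Γ VG₂ VS S) (m : VG₁ → VG₂) : Prop :=
  ∀ v, IsLCA 𝒢₂.tree (𝒢₂.geneLeaf '' gclade 𝒢₁ v) (m v)

/-- `μ` is the lca-mapping: every node maps to the lca of the species of its leaf descendants. -/
def UsesLcaMapping (𝒢 : Recon Γ VG₁ VS S) : Prop :=
  ∀ v, IsLCA S (𝒢.μ '' clade 𝒢.tree v) (𝒢.μ v)

/-- The path component `d_path(𝒢₁,𝒢₂)` (with `m` the lca correspondence map). -/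
noncomputable def dPath (𝒢₁ : Recon Γ VG₁ VS S) (𝒢₂ : Recon Γ VG₂ VS S)
    (m : VG₁ → VG₂) : ℕ :=
  ∑ v : VG₁, S.adj.dist (𝒢₁.μ v) (𝒢₂.μ (m v))

/-- The label component `d_lbl(𝒢₁,𝒢₂)`. -/
noncomputable def dLbl (𝒢₁ : Recon Γ VG₁ VS S) (𝒢₂ : Recon Γ VG₂ VS S)
    (m : VG₁ → VG₂) : ℕ :=
  {v : VG₁ | 𝒢₁.lbl v ≠ 𝒢₂.lbl (m v)}.ncard

/-- The asymmetric dissimilarity `d_asym = α·d_path + (1−α)·d_lbl`. -/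
noncomputable def dAsym (α : ℝ) (𝒢₁ : Recon Γ VG₁ VS S) (𝒢₂ : Recon Γ VG₂ VS S)
    (m : VG₁ → VG₂) : ℝ :=
  α * (dPath 𝒢₁ 𝒢₂ m : ℝ) + (1 - α) * (dLbl 𝒢₁ 𝒢₂ m : ℝ)

/-- The Path-Label Reconciliation dissimilarity `PLR(𝒢₁,𝒢₂)`, where `m₁₂`, `m₂₁` are the
lca correspondence maps in the two directions. -/
noncomputable def PLR (α : ℝ) (𝒢₁ : Recon Γ VG₁ VS S) (𝒢₂ : Recon Γ VG₂ VS S)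
    (m₁₂ : VG₁ → VG₂) (m₂₁ : VG₂ → VG₁) : ℝ :=
  dAsym α 𝒢₁ 𝒢₂ m₁₂ + dAsym α 𝒢₂ 𝒢₁ m₂₁

/-- An edge `uv` (with `u` the parent of `v`) is redundant if both endpoints are duplications
mapped to the same species. -/
def RedundantEdge (𝒢 : Recon Γ VG₁ VS S) (u v : VG₁) : Prop :=
  IsChild 𝒢.tree v u ∧ 𝒢.μ u = 𝒢.μ v ∧ 𝒢.lbl u = Evt.dup ∧ 𝒢.lbl v = Evt.dup

/-- A reconciled gene tree is least duplication-resolved if it has no redundant edge. -/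
def LeastDupResolved (𝒢 : Recon Γ VG₁ VS S) : Prop :=
  ∀ u v, ¬ RedundantEdge 𝒢 u v

/-- `𝒢'` is obtained from `𝒢` by contracting the edge `uv` (`u` the parent of `v`), i.e.
deleting `v` and attaching its children to `u`; `φ` is the corresponding quotient map. -/
def IsContractionOf (𝒢 : Recon Γ VG₁ VS S) (u v : VG₁) (𝒢' : Recon Γ VG₂ VS S)
    (φ : VG₁ → VG₂) : Prop :=
  Function.Surjective φ ∧
  φ u = φ v ∧
  (∀ a b, φ a = φ b → a = b ∨ (a = u ∧ b = v) ∨ (a = v ∧ b = u)) ∧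
  (∀ x y, 𝒢'.tree.adj.Adj x y ↔
    ∃ a b, φ a = x ∧ φ b = y ∧ 𝒢.tree.adj.Adj a b ∧ ¬(a = u ∧ b = v) ∧ ¬(a = v ∧ b = u)) ∧
  𝒢'.tree.root = φ 𝒢.tree.root ∧
  (∀ g, 𝒢'.geneLeaf g = φ (𝒢.geneLeaf g)) ∧
  (∀ a, 𝒢'.μ (φ a) = 𝒢.μ a) ∧
  (∀ a, 𝒢'.lbl (φ a) = 𝒢.lbl a)

/-- Symmetrized redundancy relation on nodes. -/
def RedundantAdj (𝒢 : Recon Γ VG₁ VS S) (a b : VG₁) : Prop :=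
  RedundantEdge 𝒢 a b ∨ RedundantEdge 𝒢 b a

/-- `𝒢'` is the least duplication-resolved tree `LR(𝒢)` obtained by contracting every
redundant edge of `𝒢`; `φ` is the corresponding quotient map. -/
def IsLROf (𝒢 : Recon Γ VG₁ VS S) (𝒢' : Recon Γ VG₂ VS S) (φ : VG₁ → VG₂) : Prop :=
  Function.Surjective φ ∧
  (∀ a b, φ a = φ b ↔ Relation.EqvGen (RedundantAdj 𝒢) a b) ∧
  (∀ x y, 𝒢'.tree.adj.Adj x y ↔
    ∃ a b, φ a = x ∧ φ b = y ∧ 𝒢.tree.adj.Adj a b ∧ ¬ RedundantAdj 𝒢 a b) ∧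
  𝒢'.tree.root = φ 𝒢.tree.root ∧
  (∀ g, 𝒢'.geneLeaf g = φ (𝒢.geneLeaf g)) ∧
  (∀ a, 𝒢'.μ (φ a) = 𝒢.μ a) ∧
  (∀ a, 𝒢'.lbl (φ a) = 𝒢.lbl a)

/-- Isomorphism of reconciled gene trees: a leaf-fixing bijection preserving edges,
species maps and event labels. -/
def ReconIso (𝒢₁ : Recon Γ VG₁ VS S) (𝒢₂ : Recon Γ VG₂ VS S) : Prop :=
  ∃ φ : VG₁ ≃ VG₂,
    (∀ g, φ (𝒢₁.geneLeaf g) = 𝒢₂.geneLeaf g) ∧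
    (∀ a b, 𝒢₂.tree.adj.Adj (φ a) (φ b) ↔ 𝒢₁.tree.adj.Adj a b) ∧
    (∀ v, 𝒢₂.μ (φ v) = 𝒢₁.μ v) ∧
    (∀ v, 𝒢₂.lbl (φ v) = 𝒢₁.lbl v)

/-- Exactly one gene per species: the gene set is the set of species leaves, and each gene
resides in its own species. -/
def OneGenePerSpecies (𝒢 : Recon {s : VS // IsLeaf S s} VG₁ VS S) : Prop :=
  ∀ g, 𝒢.μ (𝒢.geneLeaf g) = g.1

set_option linter.unusedSectionVars false

section TreeLemmas
variable {V : Type*} [Fintype V]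

lemma RTree.conn (T : RTree V) : T.adj.Connected := T.isTree.isConnected

lemma geo_split {G : SimpleGraph V} (hc : G.Connected) {x y c : V} (w : G.Walk x y)
    (hw : w.length = G.dist x y) (hm : c ∈ w.support) :
    G.dist x y = G.dist x c + G.dist c y ∧
    (w.takeUntil c hm).length = G.dist x c ∧ (w.dropUntil c hm).length = G.dist c y := by
  have hsum : (w.takeUntil c hm).length + (w.dropUntil c hm).length = w.length := by
    rw [← SimpleGraph.Walk.length_append, SimpleGraph.Walk.take_spec]
  have h1 := SimpleGraph.dist_le (w.takeUntil c hm)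
  have h2 := SimpleGraph.dist_le (w.dropUntil c hm)
  have h3 := hc.dist_triangle (u := x) (v := c) (w := y)
  omega

lemma anc_refl (T : RTree V) (a : V) : Anc T a a := by
  have : T.adj.dist a a = 0 := by
    rw [T.conn.dist_eq_zero_iff]
  simp [Anc, this]

lemma anc_root (T : RTree V) (b : V) : Anc T T.root b := by
  have : T.adj.dist T.root T.root = 0 := by rw [T.conn.dist_eq_zero_iff]
  simp [Anc, this]

lemma anc_trans {T : RTree V} {a b c : V} (h1 : Anc T a b) (h2 : Anc T b c) :
    Anc T a c := by
  unfold Anc at *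
  have t1 := T.conn.dist_triangle (u := a) (v := b) (w := c)
  have t2 := T.conn.dist_triangle (u := T.root) (v := a) (w := c)
  omega

lemma anc_antisymm {T : RTree V} {a b : V} (h1 : Anc T a b) (h2 : Anc T b a) : a = b := by
  unfold Anc at *
  have hd : T.adj.dist a b = T.adj.dist b a := SimpleGraph.dist_comm
  have : T.adj.dist a b = 0 := by omega
  exact (T.conn.dist_eq_zero_iff).mp this

/-- a vertex on a geodesic from the root is "anc-related": root geodesic splits. -/
lemma anc_of_mem_geodesic {T : RTree V} {b c : V} (w : T.adj.Walk T.root b)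
    (hw : w.length = T.adj.dist T.root b) (hm : c ∈ w.support) : Anc T c b :=
  (geo_split T.conn w hw hm).1

/-- T1: every walk from the root to `b` visits each ancestor of `b`. -/
lemma anc_mem_support {T : RTree V} {a b : V} (hab : Anc T a b)
    (w : T.adj.Walk T.root b) : a ∈ w.support := by
  obtain ⟨p1, hp1, hl1⟩ := T.conn.exists_path_of_dist T.root a
  obtain ⟨p2, hp2, hl2⟩ := T.conn.exists_path_of_dist a b
  set W : T.adj.Walk T.root b := p1.append p2 with hW
  have hWlen : W.length = T.adj.dist T.root b := by
    rw [hW, SimpleGraph.Walk.length_append, hl1, hl2, hab]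
  have hbp : W.bypass = W := by
    apply SimpleGraph.Walk.bypass_eq_self_of_length_le
    rw [hWlen]
    exact SimpleGraph.dist_le _
  have hWpath : W.IsPath := by rw [← hbp]; exact SimpleGraph.Walk.bypass_isPath W
  have huniq := T.isTree.existsUnique_path T.root b
  have hWb : W = w.bypass := by
    exact (huniq.unique hWpath (SimpleGraph.Walk.bypass_isPath w))
  have haW : a ∈ W.support := by
    rw [hW]
    rw [SimpleGraph.Walk.mem_support_append_iff]
    left; exact SimpleGraph.Walk.end_mem_support p1
  rw [hWb] at haW
  exact SimpleGraph.Walk.support_bypass_subset w haW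

/-- T2: any two ancestors of `z` are comparable. -/
lemma anc_total {T : RTree V} {x y z : V} (hx : Anc T x z) (hy : Anc T y z) :
    Anc T x y ∨ Anc T y x := by
  obtain ⟨w, hwp, hwl⟩ := T.conn.exists_path_of_dist T.root z
  have hxw : x ∈ w.support := anc_mem_support hx w
  have hyw : y ∈ w.support := anc_mem_support hy w
  have hsplit := geo_split T.conn w hwl hxw
  by_cases hyt : y ∈ (w.takeUntil x hxw).support
  · right
    have := geo_split T.conn (w.takeUntil x hxw) hsplit.2.1 hyt
    exact this.1
  · left
    have hyd : y ∈ (w.dropUntil x hxw).support := by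
      have := SimpleGraph.Walk.mem_support_append_iff (t := y) (w.takeUntil x hxw) (w.dropUntil x hxw)
      rw [SimpleGraph.Walk.take_spec] at this
      rcases this.mp hyw with h | h
      · exact absurd h hyt
      · exact h
    have h2 := geo_split T.conn (w.dropUntil x hxw) hsplit.2.2 hyd
    -- dist x z = dist x y + dist y z ; hx, hy give the rest
    unfold Anc at *
    have t := T.conn.dist_triangle (u := T.root) (v := x) (w := y)
    omega

end TreeLemmas

section QuotientLemmas

variable {Γ : Type*} {VS VG VG' : Type*} [Fintype VS] [Fintype VG] [Fintype VG']
  {S : RTree VS} {𝒢 : Recon Γ VG VS S} {L : Recon Γ VG' VS S} {φ : VG → VG'}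

lemma RedundantAdj.adj' {a b : VG} (h : RedundantAdj 𝒢 a b) : 𝒢.tree.adj.Adj a b := by
  rcases h with h | h
  · exact h.1.1.symm
  · exact h.1.1

lemma RedundantAdj.symm' {a b : VG} (h : RedundantAdj 𝒢 a b) : RedundantAdj 𝒢 b a :=
  h.symm

lemma fiberWalk (hker : ∀ a b : VG, φ a = φ b ↔ Relation.EqvGen (RedundantAdj 𝒢) a b)
    {x y : VG} (hxy : φ x = φ y) :
    ∃ w : 𝒢.tree.adj.Walk x y, ∀ c ∈ w.support, φ c = φ x := by
  have he := (hker x y).mp hxy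
  clear hxy
  induction he with
  | rel a b hr =>
    refine ⟨hr.adj'.toWalk, ?_⟩
    intro c hc
    have hc' : c = a ∨ c = b := by
      simpa [SimpleGraph.Adj.toWalk] using hc
    rcases hc' with rfl | rfl
    · rfl
    · exact ((hker a c).mpr (Relation.EqvGen.rel _ _ hr)).symm
  | refl a => exact ⟨SimpleGraph.Walk.nil, by simp⟩
  | symm a b hab ih =>
    obtain ⟨w, hw⟩ := ih
    refine ⟨w.reverse, ?_⟩
    intro c hc
    rw [SimpleGraph.Walk.support_reverse, List.mem_reverse] at hc
    rw [hw c hc]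
    exact (hker a b).mpr hab
  | trans a b c hab hbc ih1 ih2 =>
    obtain ⟨w1, hw1⟩ := ih1
    obtain ⟨w2, hw2⟩ := ih2
    refine ⟨w1.append w2, ?_⟩
    intro d hd
    rcases (SimpleGraph.Walk.mem_support_append_iff _ _).mp hd with h | h
    · exact hw1 d h
    · exact (hw2 d h).trans ((hker a b).mpr hab).symm

lemma lift_walk (h : IsLROf 𝒢 L φ) {x y : VG'} (w : L.tree.adj.Walk x y) :
    ∀ a : VG, φ a = x → ∃ b, φ b = y ∧
      ∃ W : 𝒢.tree.adj.Walk a b, ∀ c ∈ W.support, φ c ∈ w.support := by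
  obtain ⟨hsurj, hker, hadj, hroot, hleaf, hmu, hlbl⟩ := h
  induction w with
  | nil =>
    intro a ha
    exact ⟨a, ha, SimpleGraph.Walk.nil, by simp [ha]⟩
  | @cons x x' y hxadj w' ih =>
    intro a ha
    obtain ⟨a₁, b₁, ha₁, hb₁, hab, hnr⟩ := (hadj x x').mp hxadj
    obtain ⟨w₀, hw₀⟩ := fiberWalk hker (ha.trans ha₁.symm)
    obtain ⟨b, hb, W', hW'⟩ := ih b₁ hb₁
    refine ⟨b, hb, w₀.append (SimpleGraph.Walk.cons hab W'), ?_⟩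
    intro c hc
    rcases (SimpleGraph.Walk.mem_support_append_iff _ _).mp hc with hcm | hcm
    · rw [hw₀ c hcm, ha]
      exact SimpleGraph.Walk.start_mem_support _
    · rw [SimpleGraph.Walk.support_cons, List.mem_cons] at hcm
      rcases hcm with rfl | hcm
      · rw [ha₁]
        exact SimpleGraph.Walk.start_mem_support _
      · have := hW' c hcm
        rw [SimpleGraph.Walk.support_cons]
        exact List.mem_cons_of_mem _ this

lemma push_walk (h : IsLROf 𝒢 L φ) {a b : VG} (W : 𝒢.tree.adj.Walk a b) :
    ∃ w : L.tree.adj.Walk (φ a) (φ b), ∀ x ∈ w.support, ∃ c ∈ W.support, φ c = x := by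
  obtain ⟨hsurj, hker, hadj, hroot, hleaf, hmu, hlbl⟩ := h
  induction W with
  | nil => exact ⟨SimpleGraph.Walk.nil, by simp⟩
  | @cons a a' b hxadj W' ih =>
    obtain ⟨w', hw'⟩ := ih
    by_cases hred : RedundantAdj 𝒢 a a'
    · have heq : φ a' = φ a := ((hker a a').mpr (Relation.EqvGen.rel _ _ hred)).symm
      refine ⟨w'.copy heq rfl, ?_⟩
      intro x hx
      rw [SimpleGraph.Walk.support_copy] at hx
      obtain ⟨c, hc, hcx⟩ := hw' x hx
      exact ⟨c, by rw [SimpleGraph.Walk.support_cons]; exact List.mem_cons_of_mem _ hc, hcx⟩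
    · have : L.tree.adj.Adj (φ a) (φ a') := (hadj _ _).mpr ⟨a, a', rfl, rfl, hxadj, hred⟩
      refine ⟨SimpleGraph.Walk.cons this w', ?_⟩
      intro x hx
      rw [SimpleGraph.Walk.support_cons, List.mem_cons] at hx
      rcases hx with rfl | hx
      · exact ⟨a, SimpleGraph.Walk.start_mem_support _, rfl⟩
      · obtain ⟨c, hc, hcx⟩ := hw' x hx
        exact ⟨c, by rw [SimpleGraph.Walk.support_cons]; exact List.mem_cons_of_mem _ hc, hcx⟩

lemma anc_push (h : IsLROf 𝒢 L φ) {a b : VG} (hab : Anc 𝒢.tree a b) :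
    Anc L.tree (φ a) (φ b) := by
  obtain ⟨w, hwp, hwl⟩ := L.tree.conn.exists_path_of_dist L.tree.root (φ b)
  have hroot : L.tree.root = φ 𝒢.tree.root := h.2.2.2.1
  have hmem : φ a ∈ w.support := by
    obtain ⟨b', hb', W, hW⟩ := lift_walk h (w.copy hroot rfl) 𝒢.tree.root rfl
    obtain ⟨w₂, hw₂⟩ := fiberWalk h.2.1 (x := b') (y := b) hb'
    have haW : a ∈ (W.append w₂).support := anc_mem_support hab _
    rcases (SimpleGraph.Walk.mem_support_append_iff _ _).mp haW with hm | hm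
    · have := hW a hm
      rwa [SimpleGraph.Walk.support_copy] at this
    · have : φ a = φ b' := hw₂ a hm
      rw [this, hb']
      exact SimpleGraph.Walk.end_mem_support w
  exact anc_of_mem_geodesic w hwl hmem

lemma anc_pull (h : IsLROf 𝒢 L φ) {a b : VG}
    (htop : ∀ a₁, φ a₁ = φ a → Anc 𝒢.tree a a₁)
    (hab : Anc L.tree (φ a) (φ b)) : Anc 𝒢.tree a b := by
  obtain ⟨W, hWp, hWl⟩ := 𝒢.tree.conn.exists_path_of_dist 𝒢.tree.root b
  obtain ⟨w, hw⟩ := push_walk h W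
  have hroot : L.tree.root = φ 𝒢.tree.root := h.2.2.2.1
  have hmem : φ a ∈ (w.copy hroot.symm rfl).support := anc_mem_support hab _
  rw [SimpleGraph.Walk.support_copy] at hmem
  obtain ⟨c, hcW, hc⟩ := hw _ hmem
  exact anc_trans (htop c hc) (anc_of_mem_geodesic W hWl hcW)

lemma redadj_anc {a b : VG} (h : RedundantAdj 𝒢 a b) :
    Anc 𝒢.tree a b ∨ Anc 𝒢.tree b a := by
  rcases h with h | h
  · exact Or.inl h.1.2
  · exact Or.inr h.1.2

lemma exists_top (h : IsLROf 𝒢 L φ) (v' : VG') :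
    ∃ a, φ a = v' ∧ ∀ a₁, φ a₁ = φ a → Anc 𝒢.tree a a₁ := by
  classical
  obtain ⟨hsurj, hker, _⟩ := h
  obtain ⟨a₀, ha₀⟩ := hsurj v'
  set F : Finset VG := Finset.univ.filter (fun a => φ a = v') with hF
  have hne : F.Nonempty := ⟨a₀, by simp [hF, ha₀]⟩
  obtain ⟨a, haF, hmin⟩ := F.exists_min_image (fun c => 𝒢.tree.adj.dist 𝒢.tree.root c) hne
  have hav : φ a = v' := by simpa [hF] using haF
  refine ⟨a, hav, ?_⟩
  -- helper: one redundancy step preserves "Anc a · together with being in the fiber"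
  have step : ∀ x y : VG, RedundantAdj 𝒢 x y →
      (Anc 𝒢.tree a x ∧ φ x = v') → (Anc 𝒢.tree a y ∧ φ y = v') := by
    intro x y hr ⟨hax, hxv⟩
    have hyv : φ y = v' := ((hker x y).mpr (Relation.EqvGen.rel _ _ hr)).symm.trans hxv
    rcases redadj_anc hr with hxy | hyx
    · exact ⟨anc_trans hax hxy, hyv⟩
    · refine ⟨?_, hyv⟩
      rcases anc_total hax hyx with hay | hya
      · exact hay
      · -- y is an ancestor of the minimal-depth a, so y = a
        have hyF : y ∈ F := by simp [hF, hyv]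
        have hle := hmin y hyF
        have : y = a := by
          unfold Anc at hya
          have h0 : 𝒢.tree.adj.dist y a = 0 := by omega
          exact (𝒢.tree.conn.dist_eq_zero_iff).mp h0
        subst this
        exact anc_refl _ _
  intro a₁ ha₁
  have he := (hker a a₁).mp ha₁.symm
  have key : ∀ x y : VG, Relation.EqvGen (RedundantAdj 𝒢) x y →
      ((Anc 𝒢.tree a x ∧ φ x = v') ↔ (Anc 𝒢.tree a y ∧ φ y = v')) := by
    intro x y hxy
    induction hxy with
    | rel p q hr => exact ⟨step p q hr, step q p hr.symm'⟩
    | refl p => exact Iff.rfl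
    | symm p q _ ih => exact ih.symm
    | trans p q r _ _ ih1 ih2 => exact ih1.trans ih2
  exact ((key a a₁ he).mp ⟨anc_refl _ _, hav⟩).1

end QuotientLemmas

section Assembly

variable {Γ : Type*} {VS : Type*} [Fintype VS] {S : RTree VS}

lemma lca_unique {V : Type*} [Fintype V] {T : RTree V} {X : Set V} {w w' : V}
    (h1 : IsLCA T X w) (h2 : IsLCA T X w') : w = w' :=
  anc_antisymm (h2.2 w h1.1) (h1.2 w' h2.1)

lemma key_map {VG₁ VG₂ VG₁' VG₂' : Type*}
    [Fintype VG₁] [Fintype VG₂] [Fintype VG₁'] [Fintype VG₂']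
    {𝒢₁ : Recon Γ VG₁ VS S} {𝒢₂ : Recon Γ VG₂ VS S}
    {L₁ : Recon Γ VG₁' VS S} {L₂ : Recon Γ VG₂' VS S}
    {φ₁ : VG₁ → VG₁'} (hφ₁ : IsLROf 𝒢₁ L₁ φ₁)
    {φ₂ : VG₂ → VG₂'} (hφ₂ : IsLROf 𝒢₂ L₂ φ₂)
    {m₁₂ : VG₁ → VG₂} {n₁₂ : VG₁' → VG₂'}
    (hm₁₂ : IsLcaMap 𝒢₁ 𝒢₂ m₁₂) (hn₁₂ : IsLcaMap L₁ L₂ n₁₂)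
    {v : VG₁} {v' : VG₁'} (hv : φ₁ v = v')
    (htop : ∀ a₁, φ₁ a₁ = φ₁ v → Anc 𝒢₁.tree v a₁) :
    φ₂ (m₁₂ v) = n₁₂ v' := by
  have hgl₁ : ∀ g, L₁.geneLeaf g = φ₁ (𝒢₁.geneLeaf g) := hφ₁.2.2.2.2.1
  have hgl₂ : ∀ g, L₂.geneLeaf g = φ₂ (𝒢₂.geneLeaf g) := hφ₂.2.2.2.2.1
  -- clades agree
  have hclade : gclade L₁ v' = gclade 𝒢₁ v := by
    ext g
    simp only [gclade, Set.mem_setOf_eq]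
    rw [hgl₁ g, ← hv]
    constructor
    · exact fun hg => anc_pull hφ₁ htop hg
    · exact fun hg => anc_push hφ₁ hg
  have himg : L₂.geneLeaf '' gclade L₁ v' = φ₂ '' (𝒢₂.geneLeaf '' gclade 𝒢₁ v) := by
    rw [hclade, ← Set.image_comp]
    exact Set.image_congr fun g _ => hgl₂ g
  have hlca₂ : IsLCA L₂.tree (L₂.geneLeaf '' gclade L₁ v') (φ₂ (m₁₂ v)) := by
    rw [himg]
    constructor
    · rintro x' ⟨x, hx, rfl⟩
      exact anc_push hφ₂ ((hm₁₂ v).1 x hx)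
    · intro w' hw'
      obtain ⟨a, haw, hatop⟩ := exists_top hφ₂ w'
      have ha : ∀ x ∈ 𝒢₂.geneLeaf '' gclade 𝒢₁ v, Anc 𝒢₂.tree a x := by
        intro x hx
        apply anc_pull hφ₂ hatop
        rw [haw]
        exact hw' (φ₂ x) ⟨x, hx, rfl⟩
      have := (hm₁₂ v).2 a ha
      rw [← haw]
      exact anc_push hφ₂ this
  exact lca_unique hlca₂ (hn₁₂ v')

lemma one_side {VG₁ VG₂ VG₁' VG₂' : Type*}
    [Fintype VG₁] [Fintype VG₂] [Fintype VG₁'] [Fintype VG₂']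
    {𝒢₁ : Recon Γ VG₁ VS S} {𝒢₂ : Recon Γ VG₂ VS S}
    {L₁ : Recon Γ VG₁' VS S} {L₂ : Recon Γ VG₂' VS S}
    {φ₁ : VG₁ → VG₁'} (hφ₁ : IsLROf 𝒢₁ L₁ φ₁)
    {φ₂ : VG₂ → VG₂'} (hφ₂ : IsLROf 𝒢₂ L₂ φ₂)
    {m₁₂ : VG₁ → VG₂} {n₁₂ : VG₁' → VG₂'}
    (hm₁₂ : IsLcaMap 𝒢₁ 𝒢₂ m₁₂) (hn₁₂ : IsLcaMap L₁ L₂ n₁₂) :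
    dPath L₁ L₂ n₁₂ ≤ dPath 𝒢₁ 𝒢₂ m₁₂ ∧ dLbl L₁ L₂ n₁₂ ≤ dLbl 𝒢₁ 𝒢₂ m₁₂ := by
  classical
  choose ι hι hτ using fun v' => exists_top hφ₁ v'
  have hinj : Function.Injective ι := fun x y hxy => by
    rw [← hι x, ← hι y, hxy]
  have hkey : ∀ v', φ₂ (m₁₂ (ι v')) = n₁₂ v' :=
    fun v' => key_map hφ₁ hφ₂ hm₁₂ hn₁₂ (hι v') (hτ v')
  have hμ₁ : ∀ v', L₁.μ v' = 𝒢₁.μ (ι v') := fun v' => by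
    have := hφ₁.2.2.2.2.2.1 (ι v'); rwa [hι v'] at this
  have hμ₂ : ∀ v', L₂.μ (n₁₂ v') = 𝒢₂.μ (m₁₂ (ι v')) := fun v' => by
    have := hφ₂.2.2.2.2.2.1 (m₁₂ (ι v')); rwa [hkey v'] at this
  have hl₁ : ∀ v', L₁.lbl v' = 𝒢₁.lbl (ι v') := fun v' => by
    have := hφ₁.2.2.2.2.2.2 (ι v'); rwa [hι v'] at this
  have hl₂ : ∀ v', L₂.lbl (n₁₂ v') = 𝒢₂.lbl (m₁₂ (ι v')) := fun v' => by
    have := hφ₂.2.2.2.2.2.2 (m₁₂ (ι v')); rwa [hkey v'] at this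
  constructor
  · unfold dPath
    have : ∀ v', S.adj.dist (L₁.μ v') (L₂.μ (n₁₂ v')) =
        S.adj.dist (𝒢₁.μ (ι v')) (𝒢₂.μ (m₁₂ (ι v'))) := fun v' => by
      rw [hμ₁, hμ₂]
    calc ∑ v' : VG₁', S.adj.dist (L₁.μ v') (L₂.μ (n₁₂ v'))
        = ∑ v' : VG₁', S.adj.dist (𝒢₁.μ (ι v')) (𝒢₂.μ (m₁₂ (ι v'))) :=
          Finset.sum_congr rfl fun v' _ => this v'
      _ = ∑ v ∈ Finset.univ.image ι, S.adj.dist (𝒢₁.μ v) (𝒢₂.μ (m₁₂ v)) :=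
          (Finset.sum_image (f := fun v => S.adj.dist (𝒢₁.μ v) (𝒢₂.μ (m₁₂ v))) (fun x _ y _ h => hinj h)).symm
      _ ≤ ∑ v : VG₁, S.adj.dist (𝒢₁.μ v) (𝒢₂.μ (m₁₂ v)) :=
          Finset.sum_le_sum_of_subset (Finset.subset_univ _)
  · unfold dLbl
    have hsub : ι '' {v' : VG₁' | L₁.lbl v' ≠ L₂.lbl (n₁₂ v')} ⊆
        {v : VG₁ | 𝒢₁.lbl v ≠ 𝒢₂.lbl (m₁₂ v)} := by
      rintro v ⟨v', hv', rfl⟩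
      simp only [Set.mem_setOf_eq] at hv' ⊢
      rwa [hl₁, hl₂] at hv'
    calc {v' : VG₁' | L₁.lbl v' ≠ L₂.lbl (n₁₂ v')}.ncard
        = (ι '' {v' : VG₁' | L₁.lbl v' ≠ L₂.lbl (n₁₂ v')}).ncard :=
          (Set.ncard_image_of_injective _ hinj).symm
      _ ≤ {v : VG₁ | 𝒢₁.lbl v ≠ 𝒢₂.lbl (m₁₂ v)}.ncard :=
          Set.ncard_le_ncard hsub (Set.toFinite _)

lemma dAsym_mono {VG₁ VG₂ VG₁' VG₂' : Type*}
    [Fintype VG₁] [Fintype VG₂] [Fintype VG₁'] [Fintype VG₂']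
    {𝒢₁ : Recon Γ VG₁ VS S} {𝒢₂ : Recon Γ VG₂ VS S}
    {L₁ : Recon Γ VG₁' VS S} {L₂ : Recon Γ VG₂' VS S}
    {α : ℝ} (hα₀ : 0 ≤ α) (hα₁ : α ≤ 1)
    {m₁₂ : VG₁ → VG₂} {n₁₂ : VG₁' → VG₂'}
    (hp : dPath L₁ L₂ n₁₂ ≤ dPath 𝒢₁ 𝒢₂ m₁₂)
    (hl : dLbl L₁ L₂ n₁₂ ≤ dLbl 𝒢₁ 𝒢₂ m₁₂) :
    dAsym α L₁ L₂ n₁₂ ≤ dAsym α 𝒢₁ 𝒢₂ m₁₂ := by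
  unfold dAsym
  have h1 : (dPath L₁ L₂ n₁₂ : ℝ) ≤ (dPath 𝒢₁ 𝒢₂ m₁₂ : ℝ) := Nat.cast_le.mpr hp
  have h2 : (dLbl L₁ L₂ n₁₂ : ℝ) ≤ (dLbl 𝒢₁ 𝒢₂ m₁₂ : ℝ) := Nat.cast_le.mpr hl
  have hα₁' : 0 ≤ 1 - α := by linarith
  nlinarith

end Assembly

/-- Passing to least duplication-resolved forms cannot increase PLR. -/
theorem stmt2 {VG₁' VG₂' : Type*} [Fintype VG₁'] [Fintype VG₂']
    (hS : IsSpeciesTree S)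
    (𝒢₁ : Recon Γ VG₁ VS S) (𝒢₂ : Recon Γ VG₂ VS S)
    (L₁ : Recon Γ VG₁' VS S) (L₂ : Recon Γ VG₂' VS S)
    (α : ℝ) (hα₀ : 0 ≤ α) (hα₁ : α ≤ 1)
    (hcomp : Comparable 𝒢₁ 𝒢₂)
    (φ₁ : VG₁ → VG₁') (hφ₁ : IsLROf 𝒢₁ L₁ φ₁)
    (φ₂ : VG₂ → VG₂') (hφ₂ : IsLROf 𝒢₂ L₂ φ₂)
    (m₁₂ : VG₁ → VG₂) (m₂₁ : VG₂ → VG₁) (n₁₂ : VG₁' → VG₂') (n₂₁ : VG₂' → VG₁')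
    (hm₁₂ : IsLcaMap 𝒢₁ 𝒢₂ m₁₂) (hm₂₁ : IsLcaMap 𝒢₂ 𝒢₁ m₂₁)
    (hn₁₂ : IsLcaMap L₁ L₂ n₁₂) (hn₂₁ : IsLcaMap L₂ L₁ n₂₁) :
    PLR α L₁ L₂ n₁₂ n₂₁ ≤ PLR α 𝒢₁ 𝒢₂ m₁₂ m₂₁ := by
  have h1 := one_side hφ₁ hφ₂ hm₁₂ hn₁₂
  have h2 := one_side hφ₂ hφ₁ hm₂₁ hn₂₁
  unfold PLR
  exact add_le_add (dAsym_mono hα₀ hα₁ h1.1 h1.2) (dAsym_mono hα₀ hα₁ h2.1 h2.2)
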